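/- Let D be a dimension type with dim D = n, where n ≥ 1. Then dim(D ⊞ D) = 2n − 1 or dim(D ⊞ D) = 2n. (This is the combinatorial counterpart, via the Bockstein product theorem, of the fact that for an n-dimensional compactum X one has dim(X × X) ∈ {2n − 1, 2n}; X is a Boltyanskii compactum when dim(X × X) = 2n − 1.) -/

import Mathlib

/-- The Bockstein index set σ: the symbol ℚ together with, for every prime `p`,
the symbols ℤ_p, ℤ_{p^∞} and ℤ_{(p)}. -/
inductive Bock : Type
  | Q : Bock
  | Zp (p : Nat.Primes) : Bock
  | ZpInf (p : Nat.Primes) : Bock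
  | Zloc (p : Nat.Primes) : Bock

/-- `D` is `p`-regular: `D(ℤ_{(p)}) = D(ℤ_p) = D(ℤ_{p^∞}) = D(ℚ)`. -/
def pRegular (D : Bock → ℕ) (p : Nat.Primes) : Prop :=
  D (.Zloc p) = D (.Zp p) ∧ D (.Zp p) = D (.ZpInf p) ∧ D (.ZpInf p) = D .Q

/-- `D` is `p⁺`-singular: `D(ℤ_{p^∞}) = D(ℤ_p)` and
`D(ℤ_{(p)}) = max (D(ℚ)) (D(ℤ_{p^∞}) + 1)`. -/
def pPlusSingular (D : Bock → ℕ) (p : Nat.Primes) : Prop :=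
  D (.ZpInf p) = D (.Zp p) ∧ D (.Zloc p) = max (D .Q) (D (.ZpInf p) + 1)

/-- `D` is `p⁻`-singular: `D(ℤ_p) ≥ 1`, `D(ℤ_{p^∞}) = D(ℤ_p) - 1` and
`D(ℤ_{(p)}) = max (D(ℚ)) (D(ℤ_{p^∞}) + 1)`. -/
def pMinusSingular (D : Bock → ℕ) (p : Nat.Primes) : Prop :=
  1 ≤ D (.Zp p) ∧ D (.ZpInf p) = D (.Zp p) - 1 ∧
    D (.Zloc p) = max (D .Q) (D (.ZpInf p) + 1)

instance (D : Bock → ℕ) (p : Nat.Primes) : Decidable (pRegular D p) := by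
  unfold pRegular; infer_instance

instance (D : Bock → ℕ) (p : Nat.Primes) : Decidable (pPlusSingular D p) := by
  unfold pPlusSingular; infer_instance

instance (D : Bock → ℕ) (p : Nat.Primes) : Decidable (pMinusSingular D p) := by
  unfold pMinusSingular; infer_instance

/-- A dimension type: for every prime `p`, `D` is `p`-regular, `p⁺`-singular
or `p⁻`-singular. -/
def DimensionType (D : Bock → ℕ) : Prop :=
  ∀ p : Nat.Primes, pRegular D p ∨ pPlusSingular D p ∨ pMinusSingular D p

/-- The `p`-singularity sign ε of `D`: `+1` if `p⁺`-singular, `-1` if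
`p⁻`-singular, `0` otherwise (i.e. `p`-regular, for dimension types). -/
def bsign (D : Bock → ℕ) (p : Nat.Primes) : ℤ :=
  if pPlusSingular D p then 1 else if pMinusSingular D p then -1 else 0

/-- The product of signs: `ε⊗0 = 0⊗ε = ε`, `ε⊗ε = ε`, `+⊗− = −⊗+ = −`. -/
def signMul (a b : ℤ) : ℤ :=
  if a = 0 then b else if b = 0 then a else if a = b then a else -1

/-- The operation `D₁ ⊞ D₂` suggested by the Bockstein product theorem. -/
def boxplus (D₁ D₂ : Bock → ℕ) : Bock → ℕ := fun G =>
  match G with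
  | .Q => D₁ .Q + D₂ .Q
  | .Zp p => D₁ (.Zp p) + D₂ (.Zp p)
  | .ZpInf p =>
      let e := signMul (bsign D₁ p) (bsign D₂ p)
      let q := D₁ .Q + D₂ .Q
      let s := D₁ (.Zp p) + D₂ (.Zp p)
      if e = 0 then q else if e = 1 then s else s - 1
  | .Zloc p =>
      let e := signMul (bsign D₁ p) (bsign D₂ p)
      let q := D₁ .Q + D₂ .Q
      let s := D₁ (.Zp p) + D₂ (.Zp p)
      if e = 0 then q else if e = 1 then max q (s + 1) else max q s

/-- The involution `D ↦ D*` exchanging the decorations `+` and `−`. -/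
def dual (D : Bock → ℕ) : Bock → ℕ := fun G =>
  match G with
  | .Q => D .Q
  | .Zp p => D (.Zp p)
  | .ZpInf p =>
      if pPlusSingular D p then D (.Zp p) - 1
      else if pMinusSingular D p then D (.Zp p)
      else D (.ZpInf p)
  | .Zloc p =>
      if pPlusSingular D p then max (D .Q) (D (.Zp p))
      else if pMinusSingular D p then max (D .Q) (D (.Zp p) + 1)
      else D (.Zloc p)

/-- The operation `D₁ ⊕ D₂ = (D₁* ⊞ D₂*)*`. -/
def oplus (D₁ D₂ : Bock → ℕ) : Bock → ℕ :=
  dual (boxplus (dual D₁) (dual D₂))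

/-- The pointwise order on functions `σ → ℕ`. -/
def dle (D D' : Bock → ℕ) : Prop := ∀ G, D G ≤ D' G

/-- `dim D = n`: `D(G) ≤ n` for every `G ∈ σ` and `D(G) = n` for some `G ∈ σ`. -/
def dimEq (D : Bock → ℕ) (n : ℕ) : Prop :=
  (∀ G, D G ≤ n) ∧ ∃ G, D G = n

/-!
`D ⊞ D` nearly doubles a dimension type pointwise: `2 D(G) - 1 ≤ (D ⊞ D)(G)`, while
`(D ⊞ D)(G) ≤ 2n` as soon as `D ≤ n`. The only odd value, `2 D(ℤ_p) + 1` at `ℤ_{(p)}` for a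
`p⁺`-singular `D`, stays below `2n` because there `D(ℤ_p) < D(ℤ_{(p)}) ≤ n`. Hence the
maximum of `D ⊞ D` is `2n` or `2n - 1`.
-/

lemma signMul_self (a : ℤ) : signMul a a = a := by
  unfold signMul; split_ifs <;> simp_all

section BoxplusSelf

variable {D : Bock → ℕ} {p : Nat.Primes}

lemma pPlusSingular.not_pMinusSingular (hp : pPlusSingular D p) : ¬ pMinusSingular D p :=
  fun hm => by obtain ⟨h₁, -⟩ := hp; obtain ⟨h₂, h₃, -⟩ := hm; omega

lemma pRegular.not_pPlusSingular (hr : pRegular D p) : ¬ pPlusSingular D p :=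
  fun hp => by obtain ⟨h₁, h₂, h₃⟩ := hr; obtain ⟨-, h₄⟩ := hp; omega

lemma pRegular.not_pMinusSingular (hr : pRegular D p) : ¬ pMinusSingular D p :=
  fun hm => by obtain ⟨h₁, h₂, h₃⟩ := hr; obtain ⟨-, -, h₄⟩ := hm; omega

lemma bsign_of_pPlusSingular (hp : pPlusSingular D p) : bsign D p = 1 := by
  simp [bsign, hp]

lemma bsign_of_pMinusSingular (hm : pMinusSingular D p) : bsign D p = -1 := by
  rw [bsign, if_neg fun hp => hp.not_pMinusSingular hm, if_pos hm]

lemma bsign_of_not_singular (hp : ¬ pPlusSingular D p) (hm : ¬ pMinusSingular D p) :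
    bsign D p = 0 := by
  simp [bsign, hp, hm]

lemma boxplus_self_Q : boxplus D D .Q = 2 * D .Q :=
  (two_mul _).symm

lemma boxplus_self_Zp : boxplus D D (.Zp p) = 2 * D (.Zp p) :=
  (two_mul _).symm

lemma boxplus_self_ZpInf_of_pPlusSingular (hp : pPlusSingular D p) :
    boxplus D D (.ZpInf p) = 2 * D (.Zp p) := by
  simp [boxplus, bsign_of_pPlusSingular hp, signMul_self, two_mul]

lemma boxplus_self_ZpInf_of_pMinusSingular (hm : pMinusSingular D p) :
    boxplus D D (.ZpInf p) = 2 * D (.Zp p) - 1 := by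
  simp [boxplus, bsign_of_pMinusSingular hm, signMul_self, two_mul]

lemma boxplus_self_ZpInf_of_not_singular (hp : ¬ pPlusSingular D p)
    (hm : ¬ pMinusSingular D p) : boxplus D D (.ZpInf p) = 2 * D .Q := by
  simp [boxplus, bsign_of_not_singular hp hm, signMul_self, two_mul]

lemma boxplus_self_Zloc_of_pPlusSingular (hp : pPlusSingular D p) :
    boxplus D D (.Zloc p) = max (2 * D .Q) (2 * D (.Zp p) + 1) := by
  simp [boxplus, bsign_of_pPlusSingular hp, signMul_self, two_mul]

lemma boxplus_self_Zloc_of_pMinusSingular (hm : pMinusSingular D p) :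
    boxplus D D (.Zloc p) = max (2 * D .Q) (2 * D (.Zp p)) := by
  simp [boxplus, bsign_of_pMinusSingular hm, signMul_self, two_mul]

lemma boxplus_self_Zloc_of_not_singular (hp : ¬ pPlusSingular D p)
    (hm : ¬ pMinusSingular D p) : boxplus D D (.Zloc p) = 2 * D .Q := by
  simp [boxplus, bsign_of_not_singular hp hm, signMul_self, two_mul]

lemma boxplus_self_le {n : ℕ} (hle : ∀ G, D G ≤ n) (G : Bock) : boxplus D D G ≤ 2 * n := by
  cases G with
  | Q => have := hle .Q; rw [boxplus_self_Q]; omega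
  | Zp p => have := hle (.Zp p); rw [boxplus_self_Zp]; omega
  | ZpInf p =>
    by_cases hp : pPlusSingular D p
    · have := hle (.Zp p); rw [boxplus_self_ZpInf_of_pPlusSingular hp]; omega
    by_cases hm : pMinusSingular D p
    · have := hle (.Zp p); rw [boxplus_self_ZpInf_of_pMinusSingular hm]; omega
    · have := hle .Q; rw [boxplus_self_ZpInf_of_not_singular hp hm]; omega
  | Zloc p =>
    by_cases hp : pPlusSingular D p
    · have := hle (.Zloc p); have := hle .Q; have := hp.1; have := hp.2
      rw [boxplus_self_Zloc_of_pPlusSingular hp]; omega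
    by_cases hm : pMinusSingular D p
    · have := hle (.Zp p); have := hle .Q; rw [boxplus_self_Zloc_of_pMinusSingular hm]; omega
    · have := hle .Q; rw [boxplus_self_Zloc_of_not_singular hp hm]; omega

lemma two_mul_sub_one_le_boxplus_self (hD : DimensionType D) (G : Bock) :
    2 * D G - 1 ≤ boxplus D D G := by
  cases G with
  | Q => rw [boxplus_self_Q]; omega
  | Zp p => rw [boxplus_self_Zp]; omega
  | ZpInf p =>
    rcases hD p with hr | hp | hm
    · have := hr.2.2
      rw [boxplus_self_ZpInf_of_not_singular hr.not_pPlusSingular hr.not_pMinusSingular]; omega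
    · have := hp.1; rw [boxplus_self_ZpInf_of_pPlusSingular hp]; omega
    · have := hm.2.1; rw [boxplus_self_ZpInf_of_pMinusSingular hm]; omega
  | Zloc p =>
    rcases hD p with hr | hp | hm
    · rw [boxplus_self_Zloc_of_not_singular hr.not_pPlusSingular hr.not_pMinusSingular]
      obtain ⟨h₁, h₂, h₃⟩ := hr; omega
    · rw [boxplus_self_Zloc_of_pPlusSingular hp]; obtain ⟨h₁, h₂⟩ := hp; omega
    · rw [boxplus_self_Zloc_of_pMinusSingular hm]; obtain ⟨h₁, h₂, h₃⟩ := hm; omega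

end BoxplusSelf

lemma dimEq_sub_one_or_dimEq {f : Bock → ℕ} {m : ℕ} (hle : ∀ G, f G ≤ m)
    (hge : ∃ G, m - 1 ≤ f G) : dimEq f (m - 1) ∨ dimEq f m := by
  by_cases hm : ∃ G, f G = m
  · exact .inr ⟨hle, hm⟩
  have hlt : ∀ G, f G < m := fun G => (hle G).lt_of_ne fun h => hm ⟨G, h⟩
  obtain ⟨G, hG⟩ := hge
  exact .inl ⟨fun G => Nat.le_sub_one_of_lt (hlt G), G, (Nat.le_sub_one_of_lt (hlt G)).antisymm hG⟩

theorem dim_boxplus_self_general (D : Bock → ℕ) (hD : DimensionType D)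
    (n : ℕ) (hdim : dimEq D n) :
    dimEq (boxplus D D) (2 * n - 1) ∨ dimEq (boxplus D D) (2 * n) := by
  obtain ⟨hle, G, hG⟩ := hdim
  refine dimEq_sub_one_or_dimEq (boxplus_self_le hle) ⟨G, ?_⟩
  simpa [hG] using two_mul_sub_one_le_boxplus_self hD G

/-- Let D be a dimension type with dim D = n, where n ≥ 1. Then
dim(D ⊞ D) = 2n − 1 or dim(D ⊞ D) = 2n. -/
theorem dim_boxplus_self (D : Bock → ℕ) (hD : DimensionType D)
    (n : ℕ) (hn : 1 ≤ n) (hdim : dimEq D n) :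
    dimEq (boxplus D D) (2 * n - 1) ∨ dimEq (boxplus D D) (2 * n) :=
  dim_boxplus_self_general D hD n hdim
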